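/- arXiv:1902.02660 — 5 statements merged into one kernel-verified Lean document; each statement's English description precedes it below -/
import Mathlib

section
/- Every classifier in ℝ^d whose positive decision region is the interior of a convex polytope with N facets is realizable as a 1-nearest-neighbour classifier with a reference set of N+1 labelled points (one positive prototype and N negative prototypes), where ties on the boundary may be broken arbitrarily. -/
noncomputable section
open scoped RealInnerProductSpace

/-- `d`-dimensional Euclidean space. -/
abbrev Euc (d : ℕ) := EuclideanSpace ℝ (Fin d)

/-- A family `F` of `±1`-valued classifiers (here encoded as `Bool`-valued, with
`true` = `+1`) shatters a finite set `S` if every labelling of `S` is realized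
by some member of `F`. -/
def Shatters {X : Type*} (F : Set (X → Bool)) (S : Finset X) : Prop :=
  ∀ g : X → Bool, ∃ f ∈ F, ∀ x ∈ S, f x = g x

/-- The VC dimension of a family of classifiers: the supremum of the sizes of
shattered finite sets. -/
noncomputable def VCdim {X : Type*} (F : Set (X → Bool)) : ℕ∞ :=
  ⨆ (S : Finset X) (_ : Shatters F S), (S.card : ℕ∞)

/-- `f` is a 1-nearest-neighbour classifier for prototypes `p` with labels `ℓ`:
every point receives the label of one of its nearest prototypes (ties broken
arbitrarily). -/
def IsNearestNbrClassifier {d m : ℕ} (p : Fin m → Euc d) (ℓ : Fin m → Bool)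
    (f : Euc d → Bool) : Prop :=
  ∀ x : Euc d, ∃ i : Fin m, (∀ j : Fin m, dist x (p i) ≤ dist x (p j)) ∧ f x = ℓ i

/-- The family of all 1NN classifiers in `ℝ^d` with a reference set of `m`
labelled prototypes. -/
def OneNN (d m : ℕ) : Set (Euc d → Bool) :=
  {f | ∃ (p : Fin m → Euc d) (ℓ : Fin m → Bool), IsNearestNbrClassifier p ℓ f}

/-- Every classifier on `ℝ^d` whose positive region is the interior of a
convex polytope with `N` facets (given as an intersection of `N` closed
half-spaces with nonempty interior), and whose negative region contains the
complement of the closure of the polytope (values on the boundary are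
arbitrary), is realizable as a 1NN classifier with a reference set of `N + 1`
labelled prototypes, exactly one of which is positive. -/
theorem polytope_classifier_is_oneNN
    {d N : ℕ} (f : Euc d → Bool)
    (a : Fin N → Euc d) (b : Fin N → ℝ) (ha : ∀ i, a i ≠ 0)
    (hne : ∃ x : Euc d, ∀ i, ⟪a i, x⟫ < b i)
    (hpos : ∀ x : Euc d,
      x ∈ interior (⋂ i, {z : Euc d | ⟪a i, z⟫ ≤ b i}) → f x = true)
    (hneg : ∀ x : Euc d,
      x ∉ closure (⋂ i, {z : Euc d | ⟪a i, z⟫ ≤ b i}) → f x = false) :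
    ∃ (p : Fin (N + 1) → Euc d) (ℓ : Fin (N + 1) → Bool),
      (∃! i, ℓ i = true) ∧ IsNearestNbrClassifier p ℓ f := by
  obtain ⟨c, hc⟩ := hne
  have hnorm : ∀ i, (0:ℝ) < ‖a i‖^2 := fun i => pow_pos (norm_pos_iff.mpr (ha i)) 2
  obtain ⟨t, htpos, h1⟩ : ∃ t : Fin N → ℝ, (∀ i, 0 < t i) ∧
      ∀ i, t i * ‖a i‖^2 = 2 * (b i - ⟪a i, c⟫) :=
    ⟨fun i => 2 * (b i - ⟪a i, c⟫) / ‖a i‖^2,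
      fun i => div_pos (by have := hc i; linarith) (hnorm i),
      fun i => div_mul_cancel₀ _ (hnorm i).ne'⟩
  set q : Fin N → Euc d := fun i => c + t i • a i with hqdef
  have key : ∀ (i : Fin N) (x : Euc d),
      ‖x - c‖^2 - ‖x - q i‖^2 = 2 * t i * (⟪a i, x⟫ - b i) := by
    intro i x
    have h2 : x - q i = (x - c) - t i • a i := by
      simp only [hqdef]; abel
    have h3 : ⟪x - c, a i⟫ = ⟪a i, x⟫ - ⟪a i, c⟫ := by
      rw [real_inner_comm, inner_sub_right]
    have h4 : ‖(x - c) - t i • a i‖^2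
        = ‖x - c‖^2 - 2 * (t i * ⟪x - c, a i⟫) + (t i)^2 * ‖a i‖^2 := by
      rw [norm_sub_sq_real, real_inner_smul_right, norm_smul, Real.norm_eq_abs,
        mul_pow, sq_abs]
    rw [h2, h4, h3]
    linear_combination (- t i) * h1 i
  have hdist : ∀ (i : Fin N) (x : Euc d),
      dist x c ≤ dist x (q i) ↔ ⟪a i, x⟫ ≤ b i := by
    intro i x
    rw [dist_eq_norm, dist_eq_norm]
    constructor
    · intro h
      have h2 : ‖x - c‖^2 ≤ ‖x - q i‖^2 :=
        pow_le_pow_left₀ (norm_nonneg _) h 2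
      nlinarith [key i x, htpos i]
    · intro h
      have h2 : ‖x - c‖^2 ≤ ‖x - q i‖^2 := by nlinarith [key i x, htpos i]
      nlinarith [norm_nonneg (x - c), norm_nonneg (x - q i)]
  have hdist2 : ∀ (i : Fin N) (x : Euc d),
      dist x (q i) ≤ dist x c ↔ b i ≤ ⟪a i, x⟫ := by
    intro i x
    rw [dist_eq_norm, dist_eq_norm]
    constructor
    · intro h
      have h2 : ‖x - q i‖^2 ≤ ‖x - c‖^2 :=
        pow_le_pow_left₀ (norm_nonneg _) h 2
      nlinarith [key i x, htpos i]
    · intro h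
      have h2 : ‖x - q i‖^2 ≤ ‖x - c‖^2 := by nlinarith [key i x, htpos i]
      nlinarith [norm_nonneg (x - c), norm_nonneg (x - q i)]
  have hcont : ∀ i, Continuous fun z : Euc d => (⟪a i, z⟫ : ℝ) :=
    fun i => continuous_const.inner continuous_id
  have hclosed : IsClosed (⋂ i, {z : Euc d | ⟪a i, z⟫ ≤ b i}) :=
    isClosed_iInter fun i =>
      isClosed_le (hcont i) continuous_const
  have hopensub : {z : Euc d | ∀ i, ⟪a i, z⟫ < b i} ⊆
      interior (⋂ i, {z : Euc d | ⟪a i, z⟫ ≤ b i}) := by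
    apply interior_maximal
    · intro z hz
      simp only [Set.mem_iInter, Set.mem_setOf_eq]
      exact fun i => (hz i).le
    · rw [Set.setOf_forall]
      exact isOpen_iInter_of_finite fun i =>
        isOpen_lt (hcont i) continuous_const
  refine ⟨Fin.cons c q, Fin.cons true (fun _ => false), ⟨0, rfl, ?_⟩, ?_⟩
  · intro j hj
    cases j using Fin.cases with
    | zero => rfl
    | succ i => simp [Fin.cons_succ] at hj
  · intro x
    by_cases hfx : f x = true
    · have hx : ∀ i, ⟪a i, x⟫ ≤ b i := by
        by_contra hcon
        push_neg at hcon
        have hxn : x ∉ (⋂ i, {z : Euc d | ⟪a i, z⟫ ≤ b i}) := by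
          simp only [Set.mem_iInter, Set.mem_setOf_eq]
          push_neg
          exact hcon
        have := hneg x (by rwa [hclosed.closure_eq])
        simp [this] at hfx
      refine ⟨0, ?_, by simp [hfx]⟩
      intro j
      cases j using Fin.cases with
      | zero => exact le_refl _
      | succ i => simpa [Fin.cons_zero, Fin.cons_succ] using (hdist i x).mpr (hx i)
    · have hfx' : f x = false := by simpa using hfx
      have hxint : x ∉ interior (⋂ i, {z : Euc d | ⟪a i, z⟫ ≤ b i}) :=
        fun h => by simp [hpos x h] at hfx'
      have hex : ∃ i, b i ≤ ⟪a i, x⟫ := by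
        by_contra hcon
        push_neg at hcon
        exact hxint (hopensub (fun i => hcon i))
      obtain ⟨i₀, hi₀⟩ := hex
      obtain ⟨j, -, hj⟩ := Finset.exists_min_image Finset.univ
        (fun k => dist x (q k)) ⟨i₀, Finset.mem_univ _⟩
      refine ⟨j.succ, ?_, by simp [Fin.cons_succ, hfx']⟩
      intro k
      cases k using Fin.cases with
      | zero =>
        simp only [Fin.cons_zero, Fin.cons_succ]
        calc dist x (q j) ≤ dist x (q i₀) := hj i₀ (Finset.mem_univ _)
        _ ≤ dist x c := (hdist2 i₀ x).mpr hi₀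
      | succ k' =>
        simpa [Fin.cons_succ] using hj k' (Finset.mem_univ _)
end
end

section
/- In a regular n-gon with n = 2m−1 odd (m ≥ 3) inscribed in a circle, no vertex lies strictly between the line containing a longest diagonal and the diameter of the circumcircle parallel to that diagonal. -/
/-!
On the vertices the functional is `⟪w, v k⟫ = ⟪w, c⟫ + r R cos (ψ + 2πk/n)` with `n = 2m - 1`,
where `(r, φ)` are polar coordinates of `w` and `ψ = θ - φ`, so a vertex strictly inside the strip
has `|cos (ψ + 2πk/n)| < |cos (ψ + 2πj/n)|`. Parallelism `cos (ψ + 2πj/n) = cos (ψ + 2πe/n)` forces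
`ψ + π(j + e)/n ∈ πℤ`, hence `|cos (ψ + 2πk/n)| = |cos (π(2k - j - e)/n)|`. Since `n` is odd,
`π/2 - πs/n` is an odd multiple of `π/(2n)`, so `|cos (πs/n)| ≥ sin (π/(2n))` for every integer `s`,
with equality at `s = e - j = (n ± 1)/2`: the longest diagonal attains the minimum.
-/

noncomputable section
open scoped RealInnerProductSpace

open Real

lemma abs_sub_left_lt_of_min_lt_of_lt_max {α : Type*} [AddCommGroup α] [LinearOrder α]
    [IsOrderedAddMonoid α] {a b x : α} (h₁ : min a b < x) (h₂ : x < max a b) :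
    |x - a| < |b - a| := by
  rcases le_total a b with hab | hab
  · rw [min_eq_left hab] at h₁
    rw [max_eq_right hab] at h₂
    rw [abs_of_pos (sub_pos.2 h₁), abs_of_nonneg (sub_nonneg.2 hab)]
    exact sub_lt_sub_right h₂ a
  · rw [min_eq_right hab] at h₁
    rw [max_eq_left hab] at h₂
    rw [abs_of_neg (sub_neg.2 h₂), abs_of_nonpos (sub_nonpos.2 hab)]
    exact neg_lt_neg (sub_lt_sub_right h₁ a)

lemma sin_pi_div_le_sin_pi_mul_div {M r : ℝ} (h₁ : 1 ≤ r) (h₂ : r ≤ M - 1) :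
    sin (π / M) ≤ sin (π * r / M) := by
  have hM : 0 < M := by linarith
  have hy : 0 < π / M := by positivity
  have hyx : π / M ≤ π * r / M := by gcongr; exact le_mul_of_one_le_right pi_pos.le h₁
  have hxy : π * r / M + π / M ≤ π := by
    rw [← add_div, div_le_iff₀ hM]; nlinarith [pi_pos]
  rw [← sub_nonneg, sin_sub_sin]
  refine mul_nonneg (mul_nonneg zero_le_two (sin_nonneg_of_nonneg_of_le_pi ?_ ?_))
    (cos_nonneg_of_neg_pi_div_two_le_of_le ?_ ?_) <;> linarith

lemma sin_pi_div_le_abs_sin_pi_mul_div {M q : ℤ} (hM : 0 < M) (hq : ¬ M ∣ q) :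
    sin (π / M) ≤ |sin (π * q / M)| := by
  have hMR : (0 : ℝ) < M := by exact_mod_cast hM
  have hshift : π * q / M = π * (q % M : ℤ) / M + (q / M : ℤ) * π := by
    conv_lhs => rw [← Int.emod_add_mul_ediv q M]
    push_cast
    field_simp
  rw [hshift, sin_add_int_mul_pi, abs_mul, abs_neg_one_zpow, one_mul]
  have hr₀ : q % M ≠ 0 := fun h => hq (Int.dvd_of_emod_eq_zero h)
  have hr₁ : 1 ≤ q % M := by have := Int.emod_nonneg q hM.ne'; omega
  have hr₂ : q % M ≤ M - 1 := by have := Int.emod_lt_of_pos q hM; omega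
  refine (sin_pi_div_le_sin_pi_mul_div ?_ ?_).trans (le_abs_self _)
  · exact_mod_cast hr₁
  · exact_mod_cast hr₂

lemma sin_pi_div_two_mul_le_abs_cos_pi_mul_div {n : ℤ} (hn : 0 < n) (hodd : Odd n) (s : ℤ) :
    sin (π / (2 * n)) ≤ |cos (π * s / n)| := by
  have hnR : (0 : ℝ) < n := by exact_mod_cast hn
  have hq : ¬ 2 * n ∣ n - 2 * s := fun h =>
    Int.not_even_iff_odd.2 (hodd.sub_even (even_two_mul s))
      (even_iff_two_dvd.2 (dvd_trans ⟨n, rfl⟩ h))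
  have h := sin_pi_div_le_abs_sin_pi_mul_div (by omega) hq
  -- `π/2 - πs/n = π(n - 2s)/(2n)`
  rw [← sin_pi_div_two_sub]
  convert h using 3 <;> push_cast <;> field_simp

lemma abs_cos_pi_mul_div_of_two_mul_eq {n d : ℤ} (hn : 0 < n)
    (hd : 2 * d = n - 1 ∨ 2 * d = n + 1) :
    |cos (π * d / n)| = sin (π / (2 * n)) := by
  have hnR : (1 : ℝ) ≤ n := by exact_mod_cast hn
  have hsin : 0 ≤ sin (π / (2 * n)) :=
    sin_nonneg_of_nonneg_of_le_pi (by positivity) (div_le_self pi_pos.le (by linarith))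
  rcases hd with hd | hd
  · have hdR : (d : ℝ) = (n - 1) / 2 := by
      rw [eq_div_iff two_ne_zero, mul_comm]; exact_mod_cast hd
    rw [hdR, show π * ((n - 1) / 2) / n = π / 2 - π / (2 * n) by field_simp,
      cos_pi_div_two_sub, abs_of_nonneg hsin]
  · have hdR : (d : ℝ) = (n + 1) / 2 := by
      rw [eq_div_iff two_ne_zero, mul_comm]; exact_mod_cast hd
    rw [hdR, show π * ((n + 1) / 2) / n = π / (2 * n) + π / 2 by field_simp; ring,
      cos_add_pi_div_two, abs_neg, abs_of_nonneg hsin]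

lemma abs_cos_pi_mul_div_le_of_two_mul_eq {n d : ℤ} (hn : 0 < n)
    (hd : 2 * d = n - 1 ∨ 2 * d = n + 1) (s : ℤ) :
    |cos (π * d / n)| ≤ |cos (π * s / n)| := by
  have hodd : Odd n := by rcases hd with hd | hd; exacts [⟨d, by omega⟩, ⟨d - 1, by omega⟩]
  rw [abs_cos_pi_mul_div_of_two_mul_eq hn hd]
  exact sin_pi_div_two_mul_le_abs_cos_pi_mul_div hn hodd s

lemma abs_cos_le_of_cos_eq_cos {n j e : ℤ} (hn : 1 < n)
    (hd : 2 * (e - j) = n - 1 ∨ 2 * (e - j) = n + 1) {ψ : ℝ}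
    (h : cos (ψ + 2 * π * j / n) = cos (ψ + 2 * π * e / n)) (k : ℤ) :
    |cos (ψ + 2 * π * j / n)| ≤ |cos (ψ + 2 * π * k / n)| := by
  have hnR : (0 : ℝ) < n := Int.cast_pos.2 (by omega)
  have hsin : sin (π * (e - j) / n) ≠ 0 := by
    have h₁ : 0 < e - j := by omega
    have h₂ : e - j < n := by omega
    have h₁R : (0 : ℝ) < e - j := by exact_mod_cast h₁
    have h₂R : (e - j : ℝ) < n := by exact_mod_cast h₂
    refine (sin_pos_of_pos_of_lt_pi (by positivity) ?_).ne'
    rwa [div_lt_iff₀ hnR, mul_lt_mul_iff_right₀ pi_pos]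
  obtain ⟨t, ht⟩ : ∃ t : ℤ, t * π = ψ + π * (j + e) / n := by
    rw [← sin_eq_zero_iff]
    have h₀ := cos_sub_cos (ψ + 2 * π * j / n) (ψ + 2 * π * e / n)
    rw [h, sub_self, show (ψ + 2 * π * j / n - (ψ + 2 * π * e / n)) / 2 = -(π * (e - j) / n) by
      ring, sin_neg,
      show (ψ + 2 * π * j / n + (ψ + 2 * π * e / n)) / 2 = ψ + π * (j + e) / n by ring] at h₀
    simpa [hsin] using h₀.symm
  have hψ : ψ = t * π - π * (j + e) / n := by linarith
  have hreduce : ∀ k : ℤ, |cos (ψ + 2 * π * k / n)| = |cos (π * (2 * k - j - e : ℤ) / n)| := by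
    intro k
    rw [show ψ + 2 * π * k / n = π * (2 * k - j - e : ℤ) / n + t * π by
        rw [hψ]; push_cast; field_simp; ring,
      cos_add_int_mul_pi, abs_mul, abs_neg_one_zpow, one_mul]
  rw [hreduce, hreduce, show 2 * j - j - e = -(e - j) by ring, Int.cast_neg, mul_neg, neg_div,
    cos_neg]
  exact abs_cos_pi_mul_div_le_of_two_mul_eq (by omega) hd _

lemma exists_pos_eq_mul_cos_and_eq_mul_sin {a b : ℝ} (h : a ≠ 0 ∨ b ≠ 0) :
    ∃ r > 0, ∃ φ : ℝ, a = r * cos φ ∧ b = r * sin φ := by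
  have hz : (⟨a, b⟩ : ℂ) ≠ 0 := by
    rintro hz
    rw [Complex.ext_iff] at hz
    simp_all
  exact ⟨_, norm_pos_iff.2 hz, _, (Complex.norm_mul_cos_arg ⟨a, b⟩).symm,
    (Complex.norm_mul_sin_arg ⟨a, b⟩).symm⟩

lemma EuclideanSpace.inner_eq_add_mul_cos_sub {w c x : EuclideanSpace ℝ (Fin 2)} {r φ R α : ℝ}
    (hw₀ : w 0 = r * cos φ) (hw₁ : w 1 = r * sin φ)
    (hx₀ : x 0 = c 0 + R * cos α) (hx₁ : x 1 = c 1 + R * sin α) :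
    ⟪w, x⟫ = ⟪w, c⟫ + r * R * cos (α - φ) := by
  simp only [PiLp.inner_apply, Fin.sum_univ_two, RCLike.inner_apply, conj_trivial]
  rw [hw₀, hw₁, hx₀, hx₁, cos_sub]
  ring

/-- In a regular `n`-gon with `n = 2m - 1` odd (`m ≥ 3`) inscribed in a circle
of radius `R > 0` about the centre `c`, no vertex lies strictly between the
line containing a longest diagonal (from vertex `j` to vertex `j + m - 1` or
`j + m`) and the diameter of the circumcircle parallel to that diagonal.  The
open strip between the two parallel lines is described via any nonzero linear
functional `⟪w, ·⟫` constant on the diagonal: a point lies strictly between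
the two lines iff its value lies strictly between the value on the diagonal
and the value at the centre. -/
theorem no_vertex_strictly_between_longest_diagonal_and_diameter
    (m : ℕ) (hm : 3 ≤ m) (c : Euc 2) (R : ℝ) (hR : 0 < R) (θ : ℝ)
    (v : ℕ → Euc 2)
    (hv : ∀ k : ℕ,
      v k 0 = c 0 + R * Real.cos (θ + 2 * Real.pi * k / (2 * (m : ℝ) - 1)) ∧
      v k 1 = c 1 + R * Real.sin (θ + 2 * Real.pi * k / (2 * (m : ℝ) - 1)))
    (j e : ℕ) (he : e = j + m - 1 ∨ e = j + m)
    (w : Euc 2) (hw : w ≠ 0) (hpar : ⟪w, v j⟫ = ⟪w, v e⟫)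
    (k : ℕ) :
    ¬ (min ⟪w, c⟫ ⟪w, v j⟫ < ⟪w, v k⟫ ∧
        ⟪w, v k⟫ < max ⟪w, c⟫ ⟪w, v j⟫) := by
  rintro ⟨h₁, h₂⟩
  have hw' : w 0 ≠ 0 ∨ w 1 ≠ 0 := by
    by_contra! h
    exact hw (by ext i; fin_cases i <;> simp [h])
  obtain ⟨r, hr, φ, hw₀, hw₁⟩ := exists_pos_eq_mul_cos_and_eq_mul_sin hw'
  have hvertex : ∀ k : ℕ,
      ⟪w, v k⟫ = ⟪w, c⟫ + r * R * cos (θ - φ + 2 * π * k / (2 * m - 1)) := fun k => by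
    rw [EuclideanSpace.inner_eq_add_mul_cos_sub hw₀ hw₁ (hv k).1 (hv k).2, sub_add_eq_add_sub]
  have hrR : 0 < r * R := mul_pos hr hR
  have hcos := mul_left_cancel₀ hrR.ne' <| add_left_cancel <| (hvertex j).symm.trans <|
    hpar.trans (hvertex e)
  have hle := abs_cos_le_of_cos_eq_cos (n := 2 * m - 1) (j := j) (e := e) (by omega) (by omega)
    (ψ := θ - φ) (by push_cast; exact hcos) k
  have hlt := abs_sub_left_lt_of_min_lt_of_lt_max h₁ h₂
  rw [hvertex, hvertex, add_sub_cancel_left, add_sub_cancel_left, abs_mul (r * R),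
    abs_mul (r * R)] at hlt
  push_cast at hle
  exact hle.not_gt (lt_of_mul_lt_mul_left hlt (abs_nonneg _))
end
end

section
/- Any finite set of points in ℝ^2 that can be correctly dichotomised by a classifier whose positive region is an open strip between two parallel lines can also be correctly dichotomised by a classifier whose positive region is the intersection of two non-parallel open half-planes. -/
noncomputable section
open scoped RealInnerProductSpace

/-!
Keep the upper side `⟪w, x⟫ < t₂` of the strip as one half-plane and replace the lower side
`t₁ < ⟪w, x⟫` by the half-plane `t₁ + η < ⟪w + η² • u, x⟫`, where `u ≠ 0` is orthogonal to `w`.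
The new normal is not parallel to `w`, and since `S` is finite, a small enough `η > 0` changes
no point of `S` from one side to the other: points strictly above `t₁` stay above, and for the
others the `η²` tilt is dominated by the `η` shift.
-/

open Module Filter Topology

theorem exists_ne_zero_inner_eq_zero {E : Type*} [NormedAddCommGroup E] [InnerProductSpace ℝ E]
    [FiniteDimensional ℝ E] (hE : 2 ≤ finrank ℝ E) (w : E) : ∃ u : E, u ≠ 0 ∧ ⟪w, u⟫ = 0 := by
  have hspan : finrank ℝ (ℝ ∙ w) ≤ 1 := by
    simpa using finrank_span_le_card (R := ℝ) ({w} : Set E)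
  have : Nontrivial (ℝ ∙ w)ᗮ := by
    apply nontrivial_of_finrank_pos (R := ℝ)
    have := (ℝ ∙ w).finrank_add_finrank_orthogonal
    omega
  obtain ⟨⟨u, hu⟩, hu0⟩ := exists_ne (0 : (ℝ ∙ w)ᗮ)
  exact ⟨u, by simpa using hu0, Submodule.mem_orthogonal_singleton_iff_inner_right.mp hu⟩

theorem smul_add_smul_ne_smul_of_inner_eq_zero {E : Type*} [NormedAddCommGroup E]
    [InnerProductSpace ℝ E] {w u : E} (hwu : ⟪w, u⟫ = 0) (hu : u ≠ 0) {c : ℝ} (hc : c ≠ 0)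
    (a r : ℝ) : a • w + c • u ≠ r • w := by
  intro h
  have := congrArg (⟪·, u⟫) h
  simp only [inner_add_left, real_inner_smul_left, hwu] at this
  simp_all

theorem eventually_lt_iff_lt_add_sq_mul {a b t : ℝ} :
    ∀ᶠ η in 𝓝[>] 0, (t < a ↔ t + η < a + η ^ 2 * b) := by
  rcases lt_or_ge t a with hta | hat
  · have : Tendsto (fun η : ℝ => t + η - η ^ 2 * b) (𝓝[>] 0) (𝓝 t) :=
      (Continuous.tendsto' (by fun_prop) 0 t (by simp)).mono_left nhdsWithin_le_nhds
    filter_upwards [this.eventually (gt_mem_nhds hta)] with η hη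
    simp only [hta, true_iff]
    linarith
  · have : Tendsto (fun η : ℝ => η * b) (𝓝[>] 0) (𝓝 0) :=
      (Continuous.tendsto' (by fun_prop) 0 0 (by simp)).mono_left nhdsWithin_le_nhds
    filter_upwards [this.eventually (gt_mem_nhds one_pos), self_mem_nhdsWithin]
      with η hηb (hη : 0 < η)
    simp only [not_lt.2 hat, false_iff, not_lt]
    nlinarith

theorem Finset.exists_pos_forall_lt_iff_lt_add_sq_mul {α : Type*} (S : Finset α) (f h : α → ℝ)
    (t : ℝ) : ∃ η > 0, ∀ x ∈ S, (t < f x ↔ t + η < f x + η ^ 2 * h x) :=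
  (((eventually_all_finset S).2 fun _ _ => eventually_lt_iff_lt_add_sq_mul).and
    self_mem_nhdsWithin).exists.imp fun _ ⟨hS, hη⟩ => ⟨hη, hS⟩

theorem strip_dichotomy_implies_digon_dichotomy_general
    (S : Finset (Euc 2)) (g : Euc 2 → Bool)
    (w : Euc 2) (hw : w ≠ 0) (t₁ t₂ : ℝ)
    (hstrip : ∀ x ∈ S, g x = true ↔ t₁ < ⟪w, x⟫ ∧ ⟪w, x⟫ < t₂) :
    ∃ (w₁ w₂ : Euc 2) (c₁ c₂ : ℝ), w₁ ≠ 0 ∧ w₂ ≠ 0 ∧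
      (¬ ∃ r : ℝ, w₂ = r • w₁) ∧
      ∀ x ∈ S, g x = true ↔ (⟪w₁, x⟫ < c₁ ∧ ⟪w₂, x⟫ < c₂) := by
  obtain ⟨u, hu, hwu⟩ := exists_ne_zero_inner_eq_zero (by simp) w
  obtain ⟨η, hη, hS⟩ := S.exists_pos_forall_lt_iff_lt_add_sq_mul (⟪w, ·⟫) (⟪u, ·⟫) t₁
  have hcol (r : ℝ) : (-1 : ℝ) • w + (-η ^ 2) • u ≠ r • w :=
    smul_add_smul_ne_smul_of_inner_eq_zero hwu hu (by simp [hη.ne']) _ r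
  refine ⟨w, (-1 : ℝ) • w + (-η ^ 2) • u, t₂, -(t₁ + η), hw, by simpa using hcol 0,
    fun ⟨r, hr⟩ => hcol r hr, fun x hx => ?_⟩
  rw [hstrip x hx, hS x hx, and_comm]
  simp only [inner_add_left, real_inner_smul_left]
  constructor <;> rintro ⟨h₁, h₂⟩ <;> constructor <;> linarith

/-- Any finite labelled set of points in `ℝ²` that is correctly dichotomised
by a strip classifier (positive region the open strip between two distinct
parallel lines) is also correctly dichotomised by a 2-gon classifier (positive
region the intersection of two open half-planes whose bounding lines are not
parallel, i.e. whose normals are not collinear). -/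
theorem strip_dichotomy_implies_digon_dichotomy
    (S : Finset (Euc 2)) (g : Euc 2 → Bool)
    (w : Euc 2) (hw : w ≠ 0) (t₁ t₂ : ℝ) (ht : t₁ < t₂)
    (hstrip : ∀ x ∈ S, g x = true ↔ t₁ < ⟪w, x⟫ ∧ ⟪w, x⟫ < t₂) :
    ∃ (w₁ w₂ : Euc 2) (c₁ c₂ : ℝ), w₁ ≠ 0 ∧ w₂ ≠ 0 ∧
      (¬ ∃ r : ℝ, w₂ = r • w₁) ∧
      ∀ x ∈ S, g x = true ↔ (⟪w₁, x⟫ < c₁ ∧ ⟪w₂, x⟫ < c₂) :=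
  strip_dichotomy_implies_digon_dichotomy_general S g w hw t₁ t₂ hstrip
end
end

section
/- For every u > 0, the lower branch of the Lambert W function satisfies W_{−1}(−e^{−u−1}) > −1 − √(2u) − u. -/
noncomputable section

/-- The lower real branch `W₋₁` of the Lambert W function: for
`x ∈ [-1/e, 0)` it is the smallest real solution `y` of `y * exp y = x`
(the solution with `y ≤ -1`). -/
noncomputable def Wm1 (x : ℝ) : ℝ := sInf {y : ℝ | y * Real.exp y = x}

/-!
The map `y ↦ y eʸ` is strictly decreasing on `(-∞, -1]`, so `W₋₁(x) > c` as soon as `c ≤ -1`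
and `-1/e ≤ x < c e^c`. With `s = √(2u)`, i.e. `u = s²/2`, the point `c = -1 - s - u` satisfies
`c e^c = -(1 + s + s²/2) e^{-s} e^{-u-1} > -e^{-u-1}`, because `1 + s + s²/2 < eˢ`.
-/

open Real Set

/-- Squaring the quadratic lower bound at `x / 2` gains the positive terms `x³/8 + x⁴/64`. -/
lemma one_add_add_sq_div_two_lt_exp {x : ℝ} (hx : 0 < x) : 1 + x + x ^ 2 / 2 < exp x := by
  have hhalf := quadratic_le_exp_of_nonneg (half_pos hx).le
  calc 1 + x + x ^ 2 / 2 < (1 + x / 2 + (x / 2) ^ 2 / 2) ^ 2 := by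
        nlinarith [pow_pos hx 3, pow_pos hx 4]
    _ ≤ exp (x / 2) ^ 2 := by gcongr
    _ = exp x := by rw [sq, ← exp_add, add_halves]

lemma strictAntiOn_mul_exp : StrictAntiOn (fun y : ℝ => y * exp y) (Iic (-1)) := by
  refine strictAntiOn_of_deriv_neg (convex_Iic _) (by fun_prop) fun y hy => ?_
  rw [interior_Iic, mem_Iio] at hy
  have hderiv : HasDerivAt (fun y => y * exp y) (1 * exp y + y * exp y) y :=
    (hasDerivAt_id' y).mul (hasDerivAt_exp y)
  rw [hderiv.deriv]
  nlinarith [exp_pos y]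

lemma lt_Wm1 {x c : ℝ} (hc : c ≤ -1) (hx : -exp (-1) ≤ x) (hxc : x < c * exp c) :
    c < Wm1 x := by
  set S := {y : ℝ | y * exp y = x}
  have hlower : ∀ y ∈ S, c < y := fun y hy => by
    by_contra! hyc
    have hy : y * exp y = x := hy
    exact (strictAntiOn_mul_exp.antitoneOn (hyc.trans hc) hc hyc).not_gt (hy ▸ hxc)
  have hne : S.Nonempty := by
    obtain ⟨y, -, hy⟩ := intermediate_value_Icc' hc (f := fun y => y * exp y) (by fun_prop)
      ⟨by simpa using hx, hxc.le⟩
    exact ⟨y, hy⟩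
  have hclosed : IsClosed S := isClosed_eq (by fun_prop) continuous_const
  exact hlower _ (hclosed.csInf_mem hne ⟨c, fun y hy => (hlower y hy).le⟩)

lemma neg_exp_lt_mul_exp {s : ℝ} (hs : 0 < s) :
    -exp (-(s ^ 2 / 2) - 1) < (-1 - s - s ^ 2 / 2) * exp (-1 - s - s ^ 2 / 2) := by
  have hsplit : exp (-1 - s - s ^ 2 / 2) = exp (-s) * exp (-(s ^ 2 / 2) - 1) := by
    rw [← exp_add]; ring_nf
  have hdecay : (1 + s + s ^ 2 / 2) * exp (-s) < 1 := by
    rw [exp_neg, ← div_eq_mul_inv, div_lt_one (exp_pos s)]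
    exact one_add_add_sq_div_two_lt_exp hs
  rw [hsplit]
  nlinarith [exp_pos (-(s ^ 2 / 2) - 1)]

/-- Chatzigeorgiou's bound: for every `u > 0`, the lower branch of the Lambert
W function satisfies `W₋₁(-e^(-u-1)) > -1 - √(2u) - u`. -/
theorem Wm1_lower_bound (u : ℝ) (hu : 0 < u) :
    Wm1 (-Real.exp (-u - 1)) > -1 - Real.sqrt (2 * u) - u := by
  set s := √(2 * u)
  have hs : 0 < s := sqrt_pos.mpr (by linarith)
  have hu_eq : u = s ^ 2 / 2 := by rw [sq_sqrt (by linarith)]; ring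
  refine lt_Wm1 (by linarith) (neg_le_neg (exp_le_exp.mpr (by linarith))) ?_
  rw [hu_eq]
  exact neg_exp_lt_mul_exp hs
end
end

section
/- For all sufficiently large m, −(q/log 2)·W_{−1}(−(log 2/q)·2^{−m/q}) < q'·(√(2(m/q' + log q' − 1)) + m/q' + log q'), where q' = q/log 2 and q = (d+1)m(m−1)/2 for fixed d ≥ 3; consequently the VC dimension upper bound from the shatter coefficient bound S(n) ≤ 2^m n^q is O(m² log m) as m → ∞. -/
noncomputable section

/-- `q = (d+1) m (m-1) / 2`. -/
noncomputable def qFn (d m : ℕ) : ℝ := ((d : ℝ) + 1) * m * (m - 1) / 2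

/-- `q' = q / log 2`. -/
noncomputable def qFn' (d m : ℕ) : ℝ := qFn d m / Real.log 2

/-- The Lambert-function upper bound for the VC dimension obtained from the
shatter coefficient bound `S(n) ≤ 2^m n^q`. -/
noncomputable def lambertBound (d m : ℕ) : ℝ :=
  -(qFn d m / Real.log 2) *
    Wm1 (-(Real.log 2 / qFn d m) * (2 : ℝ) ^ (-((m : ℝ) / qFn d m)))

/-!
With `a = m/q' + log q'` the argument of `W₋₁` is `-exp (-a)`, so the bound equals
`q' · (-W₋₁(-e^{-a}))`. Since `B e^{-B}` decreases on `[1, ∞)`, every solution `y` of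
`y e^y = -e^{-a}` satisfies `y > -B` as soon as `B e^{-B} < e^{-a}`. The choice
`B = a + t = 1 + t + t²/2` with `t = √(2(a-1))` works because `1 + t + t²/2 < e^t`.
As `√(2(a-1)) ≤ a`, the bound is at most `2 q' a = 2(m + q' log q')`, which is
`O(m² log m)` because `q' = O(m²)`.
-/

open Real Filter Asymptotics

theorem quadratic_lt_exp_of_pos {t : ℝ} (ht : 0 < t) : 1 + t + t ^ 2 / 2 < exp t := by
  have h := sum_le_exp_of_nonneg ht.le 4
  simp only [Finset.sum_range_succ, Finset.sum_range_zero, Nat.factorial,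
    Nat.cast_succ] at h
  nlinarith [pow_pos ht 3]

theorem mul_exp_neg_le_of_one_le_of_le {B s : ℝ} (hB : 1 ≤ B) (hs : B ≤ s) :
    s * exp (-s) ≤ B * exp (-B) := by
  have hdiv : s / B ≤ exp (s - B) := by
    calc s / B ≤ s - B + 1 := by rw [div_le_iff₀ (by linarith)]; nlinarith
      _ ≤ exp (s - B) := add_one_le_exp _
  calc s * exp (-s) = B * (s / B * exp (-s)) := by field_simp
    _ ≤ B * (exp (s - B) * exp (-s)) := by gcongr
    _ = B * exp (-B) := by rw [← exp_add]; ring_nf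

theorem Wm1_nonpos {x : ℝ} (hx : x < 0) : Wm1 x ≤ 0 :=
  Real.sInf_nonpos fun y (hy : y * exp y = x) => by
    by_contra! h
    have := mul_pos h (exp_pos y)
    linarith

theorem neg_lt_Wm1 {x B : ℝ} (hB : 1 ≤ B) (hx : x < -B * exp (-B)) : -B < Wm1 x := by
  set S := {y : ℝ | y * exp y = x}
  have hS : ∀ y ∈ S, -B < y := fun y (hy : y * exp y = x) => by
    by_contra! h
    have := mul_exp_neg_le_of_one_le_of_le hB (le_neg_of_le_neg h)
    rw [neg_neg] at this
    linarith
  rcases S.eq_empty_or_nonempty with hempty | hne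
  · simp only [Wm1, S] at hempty ⊢
    rw [hempty, Real.sInf_empty]
    linarith
  · -- `S` is closed, so its infimum is a solution
    have hclosed : IsClosed S := isClosed_eq (by fun_prop) continuous_const
    exact hS _ (hclosed.csInf_mem hne ⟨-B, fun y hy => (hS y hy).le⟩)

theorem neg_Wm1_neg_exp_neg_lt {a : ℝ} (ha : 1 < a) :
    -Wm1 (-exp (-a)) < a + √(2 * (a - 1)) := by
  set t := √(2 * (a - 1))
  have ht : 0 < t := sqrt_pos.2 (by linarith)
  have ht2 : t ^ 2 = 2 * (a - 1) := sq_sqrt (by linarith)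
  have hat : a + t = 1 + t + t ^ 2 / 2 := by rw [ht2]; ring
  have hlt : (a + t) * exp (-(a + t)) < exp (-a) := by
    calc (a + t) * exp (-(a + t)) < exp t * exp (-(a + t)) := by
          gcongr; rw [hat]; exact quadratic_lt_exp_of_pos ht
      _ = exp (-a) := by rw [← exp_add]; ring_nf
  have := neg_lt_Wm1 (x := -exp (-a)) (B := a + t) (by linarith) (by linarith)
  linarith

theorem one_lt_log_natCast {m : ℕ} (hm : 3 ≤ m) : 1 < log m := by
  rw [lt_log_iff_exp_lt (by positivity)]
  have : (3 : ℝ) ≤ m := by exact_mod_cast hm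
  linarith [exp_one_lt_d9]

theorem three_le_qFn (d : ℕ) {m : ℕ} (hm : 3 ≤ m) : 3 ≤ qFn d m := by
  have : (3 : ℝ) ≤ m := by exact_mod_cast hm
  have hm6 : (6 : ℝ) ≤ m * (m - 1) := by nlinarith
  have : (0 : ℝ) ≤ d * (m * (m - 1)) := by positivity
  unfold qFn
  nlinarith

theorem qFn'_pos (d : ℕ) {m : ℕ} (hm : 3 ≤ m) : 0 < qFn' d m :=
  div_pos (by linarith [three_le_qFn d hm]) (log_pos one_lt_two)

theorem one_lt_log_qFn' (d : ℕ) {m : ℕ} (hm : 3 ≤ m) : 1 < log (qFn' d m) := by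
  rw [lt_log_iff_exp_lt (qFn'_pos d hm), qFn', lt_div_iff₀ (log_pos one_lt_two)]
  nlinarith [exp_one_lt_d9, log_two_lt_d9, three_le_qFn d hm, exp_pos 1]

theorem one_lt_div_qFn'_add_log (d : ℕ) {m : ℕ} (hm : 3 ≤ m) :
    1 < m / qFn' d m + log (qFn' d m) := by
  have := qFn'_pos d hm
  have : 0 ≤ m / qFn' d m := by positivity
  linarith [one_lt_log_qFn' d hm]

theorem qFn'_le (d m : ℕ) : qFn' d m ≤ (d + 1) * m ^ 2 := by
  rw [qFn', div_le_iff₀ (log_pos one_lt_two), qFn]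
  have hdm : (0 : ℝ) ≤ (d + 1) * m * m := by positivity
  have : (0 : ℝ) ≤ (d + 1) * m := by positivity
  nlinarith [log_two_gt_d9, mul_le_mul_of_nonneg_left log_two_gt_d9.le hdm]

theorem lambertBound_eq (d : ℕ) {m : ℕ} (hm : 3 ≤ m) :
    lambertBound d m = qFn' d m * -Wm1 (-exp (-(m / qFn' d m + log (qFn' d m)))) := by
  have hq' := qFn'_pos d hm
  have hlog2 : log 2 ≠ 0 := (log_pos one_lt_two).ne'
  have harg : -(log 2 / qFn d m) * (2 : ℝ) ^ (-((m : ℝ) / qFn d m))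
      = -exp (-(m / qFn' d m + log (qFn' d m))) := by
    rw [rpow_def_of_pos two_pos, neg_add, exp_add, exp_neg (log _), exp_log hq', qFn']
    field_simp
  rw [lambertBound, harg, qFn']
  ring

theorem abs_lambertBound_le (d : ℕ) {m : ℕ} (hm : 3 ≤ m) :
    |lambertBound d m| ≤ 2 * (m + qFn' d m * log (qFn' d m)) := by
  set a := m / qFn' d m + log (qFn' d m) with ha_def
  have hq' := qFn'_pos d hm
  have ha : 1 < a := one_lt_div_qFn'_add_log d hm
  have hW := neg_Wm1_neg_exp_neg_lt ha
  have hW0 : 0 ≤ -Wm1 (-exp (-a)) := neg_nonneg.2 (Wm1_nonpos (neg_neg_of_pos (exp_pos _)))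
  have hsqrt : √(2 * (a - 1)) ≤ a := sqrt_le_iff.2 ⟨by linarith, by nlinarith⟩
  rw [lambertBound_eq d hm, abs_of_nonneg (by positivity)]
  calc qFn' d m * -Wm1 (-exp (-a)) ≤ qFn' d m * (2 * a) := by gcongr; linarith
    _ = 2 * (m + qFn' d m * log (qFn' d m)) := by rw [ha_def]; field_simp

theorem isBigO_qFn' (d : ℕ) :
    (fun m : ℕ => qFn' d m) =O[atTop] (fun m : ℕ => (m : ℝ) ^ 2) :=
  IsBigO.of_bound (d + 1) <| eventually_atTop.2 ⟨3, fun m hm => by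
    rw [norm_of_nonneg (qFn'_pos d hm).le, norm_of_nonneg (by positivity)]
    exact qFn'_le d m⟩

theorem isBigO_log_qFn' (d : ℕ) :
    (fun m : ℕ => log (qFn' d m)) =O[atTop] (fun m : ℕ => log (m : ℝ)) :=
  IsBigO.of_bound (log (d + 1) + 2) <| eventually_atTop.2 ⟨3, fun m hm => by
    have hlogm := one_lt_log_natCast hm
    have hlogd : 0 ≤ log ((d : ℝ) + 1) := log_nonneg (by linarith [d.cast_nonneg (α := ℝ)])
    have hle : log (qFn' d m) ≤ log (d + 1) + 2 * log m := by
      rw [← Nat.cast_ofNat, ← log_pow, ← log_mul (by positivity) (by positivity)]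
      exact log_le_log (qFn'_pos d hm) (qFn'_le d m)
    rw [norm_of_nonneg (zero_le_one.trans (one_lt_log_qFn' d hm).le),
      norm_of_nonneg (by linarith)]
    nlinarith⟩

theorem isBigO_natCast_sq_mul_log :
    (fun m : ℕ => (m : ℝ)) =O[atTop] (fun m : ℕ => (m : ℝ) ^ 2 * log m) :=
  IsBigO.of_bound 1 <| eventually_atTop.2 ⟨3, fun m hm => by
    have hlogm := one_lt_log_natCast hm
    have : (1 : ℝ) ≤ m := by exact_mod_cast (by omega : 1 ≤ m)
    rw [norm_of_nonneg (by positivity), norm_of_nonneg (by positivity)]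
    nlinarith⟩

theorem lambertBound_lt_explicit_and_isBigO_general (d : ℕ) :
    (∃ M : ℕ, ∀ m : ℕ, M ≤ m →
      lambertBound d m < qFn' d m *
        (Real.sqrt (2 * ((m : ℝ) / qFn' d m + Real.log (qFn' d m) - 1))
          + (m : ℝ) / qFn' d m + Real.log (qFn' d m))) ∧
    (fun m : ℕ => lambertBound d m)
      =O[Filter.atTop] (fun m : ℕ => (m : ℝ) ^ 2 * Real.log m) := by
  refine ⟨⟨3, fun m hm => ?_⟩, ?_⟩
  · rw [lambertBound_eq d hm]
    calc _ < qFn' d m * (m / qFn' d m + log (qFn' d m)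
            + √(2 * (m / qFn' d m + log (qFn' d m) - 1))) :=
          mul_lt_mul_of_pos_left (neg_Wm1_neg_exp_neg_lt (one_lt_div_qFn'_add_log d hm))
            (qFn'_pos d hm)
      _ = _ := by ring
  · have hbound : (fun m : ℕ => lambertBound d m) =O[atTop]
        (fun m : ℕ => (m : ℝ) + qFn' d m * log (qFn' d m)) :=
      IsBigO.of_bound 2 <| eventually_atTop.2 ⟨3, fun m hm => by
        rw [norm_eq_abs, norm_of_nonneg (by nlinarith [qFn'_pos d hm, one_lt_log_qFn' d hm])]
        exact abs_lambertBound_le d hm⟩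
    exact hbound.trans (isBigO_natCast_sq_mul_log.add ((isBigO_qFn' d).mul (isBigO_log_qFn' d)))

/-- For fixed `d ≥ 3`, with `q = (d+1)m(m-1)/2` and `q' = q / log 2`: for all
sufficiently large `m` the Lambert bound is less than
`q' * (√(2 (m/q' + log q' - 1)) + m/q' + log q')`; consequently the Lambert
bound is `O(m² log m)` as `m → ∞`. -/
theorem lambertBound_lt_explicit_and_isBigO (d : ℕ) (hd : 3 ≤ d) :
    (∃ M : ℕ, ∀ m : ℕ, M ≤ m →
      lambertBound d m < qFn' d m *
        (Real.sqrt (2 * ((m : ℝ) / qFn' d m + Real.log (qFn' d m) - 1))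
          + (m : ℝ) / qFn' d m + Real.log (qFn' d m))) ∧
    (fun m : ℕ => lambertBound d m)
      =O[Filter.atTop] (fun m : ℕ => (m : ℝ) ^ 2 * Real.log m) :=
  lambertBound_lt_explicit_and_isBigO_general d
end
end
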